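/- Let α ∈ (0,1) and let k ≥ 2 be an integer. Define for β ∈ ((1−α)π/(1−α/k), π) and t ∈ (0, π/2) the point γ(t; β) = ( (2k)^α sin(t)^α sin(β + απ/2 − αt)/sin(β), −(2k)^α sin(t)^α sin(απ/2 − αt)/sin(β) ) ∈ ℝ². If β₁ ≠ β₂ are both in ((1−α)π/(1−α/k), π) and t₁, t₂ ∈ (0, π/2) satisfy γ(t₁; β₁) = γ(t₂; β₂) = (a, b), then |a| + b ≥ 0. In other words, the curves γ(·; β₁) and γ(·; β₂) do not intersect in the region {(a,b) : |a| + b < 0}. -/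

import Mathlib

/-!
Write `r = (2k)^α sin(t)^α` and `θ = α(π/2 − t) ∈ (0, π/2)`. The defining formulas of
`γ(t; β) = (a, b)` say exactly that `r e^{-iθ} = a + b e^{iβ}`, so for fixed `(a, b)` with
`b < 0` and `|a| < −b`, every `γ(·; β)` through `(a, b)` meets the circle `|z − a| = |b|` at a
point `r e^{-iθ}`. On that circle `r / cos θ = a + √(b² + (b² − a²) tan² θ)`, which decreases in `t`,
while `r / cos θ = (2k)^α sin(t)^α / cos(α(π/2 − t))` strictly increases in `t` when `α < 1`.
Hence `t`, then `r e^{-iθ}`, then `e^{iβ}` are determined by `(a, b)`, so `β₁ = β₂`.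
-/

open Real Set

lemma mul_cos_eq_and_mul_sin_eq {r θ β a b : ℝ} (hβ : sin β ≠ 0)
    (ha : r * sin (β + θ) / sin β = a) (hb : -(r * sin θ / sin β) = b) :
    r * cos θ = a + b * cos β ∧ r * sin θ = -(b * sin β) := by
  subst ha hb
  constructor
  · rw [sin_add]
    field_simp
    ring
  · field_simp

lemma div_cos_eq_add_sqrt {r θ a b : ℝ} (hr : 0 < r) (hθ : 0 < cos θ) (hab : a ^ 2 < b ^ 2)
    (h : (r * cos θ - a) ^ 2 + (r * sin θ) ^ 2 = b ^ 2) :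
    r / cos θ = a + √(b ^ 2 + (b ^ 2 - a ^ 2) * tan θ ^ 2) := by
  have hquad : r * (r - 2 * a * cos θ) = b ^ 2 - a ^ 2 := by
    linear_combination h - r ^ 2 * sin_sq_add_cos_sq θ
  have hgap : 0 < r / cos θ - a := by
    rw [sub_pos, lt_div_iff₀ hθ]
    nlinarith [cos_le_one θ]
  have hsq : (r / cos θ - a) ^ 2 = b ^ 2 + (b ^ 2 - a ^ 2) * tan θ ^ 2 := by
    rw [tan_eq_sin_div_cos]
    field_simp
    linear_combination hquad - (b ^ 2 - a ^ 2) * sin_sq_add_cos_sq θ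
  rw [← hsq, sqrt_sq hgap.le]
  ring

lemma strictMonoOn_sqrt_add_mul_tan_sq {p q : ℝ} (hp : 0 ≤ p) (hq : 0 < q) :
    StrictMonoOn (fun θ => √(p + q * tan θ ^ 2)) (Ico 0 (π / 2)) := by
  intro x hx y hy hxy
  have htan : tan x < tan y :=
    strictMonoOn_tan ⟨by linarith [hx.1, pi_pos], hx.2⟩ ⟨by linarith [hy.1, pi_pos], hy.2⟩ hxy
  have htan0 : 0 ≤ tan x := tan_nonneg_of_nonneg_of_le_pi_div_two hx.1 hx.2.le
  apply sqrt_lt_sqrt (by positivity)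
  gcongr

lemma strictMonoOn_sin_rpow_div_cos {α : ℝ} (hα0 : 0 < α) (hα1 : α < 1) :
    StrictMonoOn (fun t => sin t ^ α / cos (α * π / 2 - α * t)) (Ioo 0 (π / 2)) := by
  have hcos : ∀ t ∈ Ioo 0 (π / 2), 0 < cos (α * π / 2 - α * t) := fun t ht =>
    cos_pos_of_mem_Ioo ⟨by nlinarith [ht.2, pi_pos], by nlinarith [ht.1, pi_pos]⟩
  have hderiv : ∀ t ∈ Ioo 0 (π / 2), HasDerivAt (fun t => sin t ^ α / cos (α * π / 2 - α * t))
      (α * sin t ^ (α - 1) * cos (t + (α * π / 2 - α * t)) / cos (α * π / 2 - α * t) ^ 2) t := by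
    intro t ht
    have hsin : 0 < sin t := sin_pos_of_pos_of_lt_pi ht.1 (by linarith [ht.2, pi_pos])
    have hnum := (hasDerivAt_sin t).rpow_const (p := α) (Or.inl hsin.ne')
    have hden : HasDerivAt (fun t => cos (α * π / 2 - α * t))
        (-sin (α * π / 2 - α * t) * -α) t := by
      simpa using ((hasDerivAt_id t).const_mul α |>.const_sub (α * π / 2)).cos
    refine (hnum.div hden (hcos t ht).ne').congr_deriv ?_
    rw [cos_add, rpow_sub_one hsin.ne']
    field_simp
  refine strictMonoOn_of_deriv_pos (convex_Ioo 0 (π / 2))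
    (fun t ht => (hderiv t ht).continuousAt.continuousWithinAt) fun t ht => ?_
  rw [interior_Ioo] at ht
  rw [(hderiv t ht).deriv]
  have hsin : 0 < sin t := sin_pos_of_pos_of_lt_pi ht.1 (by linarith [ht.2, pi_pos])
  have hcos_sum : 0 < cos (t + (α * π / 2 - α * t)) :=
    cos_pos_of_mem_Ioo ⟨by nlinarith [ht.1, ht.2, pi_pos], by nlinarith [ht.1, ht.2, pi_pos]⟩
  have := hcos t ht
  positivity

lemma strictMonoOn_mul_sin_rpow_div_cos_sub_sqrt {α R p q : ℝ} (hα0 : 0 < α) (hα1 : α < 1)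
    (hR : 0 < R) (hp : 0 ≤ p) (hq : 0 < q) :
    StrictMonoOn (fun t => R * (sin t ^ α / cos (α * π / 2 - α * t)) -
      √(p + q * tan (α * π / 2 - α * t) ^ 2)) (Ioo 0 (π / 2)) := by
  have hθ : ∀ t ∈ Ioo 0 (π / 2), α * π / 2 - α * t ∈ Ico 0 (π / 2) := fun t ht =>
    ⟨by nlinarith [ht.2], by nlinarith [ht.1, pi_pos]⟩
  intro x hx y hy hxy
  have hcurve := mul_lt_mul_of_pos_left (strictMonoOn_sin_rpow_div_cos hα0 hα1 hx hy hxy) hR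
  have hcircle := strictMonoOn_sqrt_add_mul_tan_sq hp hq (hθ y hy) (hθ x hx) (by nlinarith)
  dsimp only
  linarith

lemma curve_sub_circle_eq_of_gamma_eq {α R β t a b : ℝ} (hα0 : 0 ≤ α) (hα1 : α ≤ 1) (hR : 0 < R)
    (hβ : β ∈ Ioo 0 π) (ht : t ∈ Ioo 0 (π / 2)) (hab : a ^ 2 < b ^ 2)
    (ha : R * sin t ^ α * sin (β + α * π / 2 - α * t) / sin β = a)
    (hb : -(R * sin t ^ α * sin (α * π / 2 - α * t) / sin β) = b) :
    R * (sin t ^ α / cos (α * π / 2 - α * t)) -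
        √(b ^ 2 + (b ^ 2 - a ^ 2) * tan (α * π / 2 - α * t) ^ 2) = a ∧
      R * sin t ^ α * cos (α * π / 2 - α * t) = a + b * cos β := by
  rw [add_sub_assoc] at ha
  have hr : 0 < R * sin t ^ α :=
    mul_pos hR (rpow_pos_of_pos (sin_pos_of_pos_of_lt_pi ht.1 (by linarith [ht.2, pi_pos])) α)
  have hcos : 0 < cos (α * π / 2 - α * t) := by
    have hπt : 0 < π / 2 - t := sub_pos.2 ht.2
    refine cos_pos_of_mem_Ioo ⟨?_, ?_⟩
    · nlinarith [mul_nonneg hα0 hπt.le, pi_pos]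
    · nlinarith [mul_nonneg (sub_nonneg.2 hα1) hπt.le, ht.1]
  obtain ⟨hx, hy⟩ := mul_cos_eq_and_mul_sin_eq (sin_pos_of_pos_of_lt_pi hβ.1 hβ.2).ne' ha hb
  have hcircle := div_cos_eq_add_sqrt hr hcos hab (by rw [hx, hy]; linear_combination b ^ 2 * sin_sq_add_cos_sq β)
  refine ⟨?_, hx⟩
  rw [← mul_div_assoc, hcircle]
  ring

/-- For `α ∈ (0,1)` and integer `k ≥ 2`, the curves
`γ(t; β) = ((2k)^α sin(t)^α sin(β + απ/2 − αt)/sin(β), −(2k)^α sin(t)^α sin(απ/2 − αt)/sin(β))`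
for distinct `β₁ ≠ β₂` in `((1−α)π/(1−α/k), π)` do not intersect in the region
`{(a,b) : |a| + b < 0}`. -/
theorem gamma_curves_no_intersection (α : ℝ) (hα : α ∈ Set.Ioo (0:ℝ) 1)
    (k : ℕ) (hk : 2 ≤ k) (β₁ β₂ t₁ t₂ a b : ℝ)
    (hβ₁ : β₁ ∈ Set.Ioo ((1 - α) * π / (1 - α / (k:ℝ))) π)
    (hβ₂ : β₂ ∈ Set.Ioo ((1 - α) * π / (1 - α / (k:ℝ))) π)
    (hne : β₁ ≠ β₂)
    (ht₁ : t₁ ∈ Set.Ioo (0:ℝ) (π / 2)) (ht₂ : t₂ ∈ Set.Ioo (0:ℝ) (π / 2))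
    (ha₁ : (2 * (k:ℝ)) ^ α * Real.sin t₁ ^ α * Real.sin (β₁ + α * π / 2 - α * t₁) /
      Real.sin β₁ = a)
    (hb₁ : -((2 * (k:ℝ)) ^ α * Real.sin t₁ ^ α * Real.sin (α * π / 2 - α * t₁) /
      Real.sin β₁) = b)
    (ha₂ : (2 * (k:ℝ)) ^ α * Real.sin t₂ ^ α * Real.sin (β₂ + α * π / 2 - α * t₂) /
      Real.sin β₂ = a)
    (hb₂ : -((2 * (k:ℝ)) ^ α * Real.sin t₂ ^ α * Real.sin (α * π / 2 - α * t₂) /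
      Real.sin β₂) = b) :
    0 ≤ |a| + b := by
  obtain ⟨hα0, hα1⟩ := hα
  have hk1 : (1 : ℝ) ≤ k := by exact_mod_cast (by omega : 1 ≤ k)
  have hβ_pos : ∀ β ∈ Ioo ((1 - α) * π / (1 - α / k)) π, β ∈ Ioo 0 π := fun β hβ =>
    ⟨lt_trans (div_pos (mul_pos (sub_pos.2 hα1) pi_pos)
      (sub_pos.2 ((div_lt_one (by linarith)).2 (by linarith)))) hβ.1, hβ.2⟩
  by_contra! hab
  have hb : b < 0 := by linarith [abs_nonneg a]
  have hab2 : a ^ 2 < b ^ 2 := sq_lt_sq.2 (by rw [abs_of_neg hb]; linarith)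
  have hR : 0 < (2 * (k : ℝ)) ^ α := rpow_pos_of_pos (by linarith) α
  obtain ⟨e₁, c₁⟩ := curve_sub_circle_eq_of_gamma_eq hα0.le hα1.le hR (hβ_pos β₁ hβ₁) ht₁ hab2 ha₁ hb₁
  obtain ⟨e₂, c₂⟩ := curve_sub_circle_eq_of_gamma_eq hα0.le hα1.le hR (hβ_pos β₂ hβ₂) ht₂ hab2 ha₂ hb₂
  have ht : t₁ = t₂ := (strictMonoOn_mul_sin_rpow_div_cos_sub_sqrt hα0 hα1 hR (sq_nonneg b)
    (by linarith)).injOn ht₁ ht₂ (e₁.trans e₂.symm)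
  subst ht
  have hcos : cos β₁ = cos β₂ := mul_left_cancel₀ hb.ne (by linarith)
  exact hne (injOn_cos (Ioo_subset_Icc_self (hβ_pos β₁ hβ₁))
    (Ioo_subset_Icc_self (hβ_pos β₂ hβ₂)) hcos)
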